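/- The regular hexagon with opposite sides at distance 1 can be covered by 7 closed discs of radius 1/4. -/

import Mathlib

open Metric Real
open scoped RealInnerProductSpace

/-- The regular hexagon whose opposite sides are at distance 1, realized as the
intersection of three strips of width 1 whose normals make angles `kπ/3`. -/
def regularHexagon : Set (EuclideanSpace ℝ (Fin 2)) :=
  {x | ∀ k : Fin 3, |⟪x, (!₂[cos (k * π / 3), sin (k * π / 3)] : EuclideanSpace ℝ (Fin 2))⟫| ≤ 1 / 2}

/-- Core analytic fact: the sector of the hexagon between 60° and 90° (in the
rational coordinates `a = x`, `β = √3 y`) outside the central disc is covered by the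
disc centered at `(0, √3/4)`. -/
lemma hex_sector1 (a β : ℝ) (ha : 0 ≤ a) (hT : 3*a ≤ β) (hQ : a + β ≤ 1)
    (hP : 1/16 ≤ a^2 + β^2/3) : a^2 + β^2/3 + 1/8 ≤ β/2 := by
  nlinarith [mul_nonneg (by linarith : (0:ℝ) ≤ a^2+β^2/3-1/16) (by linarith : (0:ℝ) ≤ 1-a-β),
    mul_nonneg (by linarith : (0:ℝ) ≤ β-3*a) (sq_nonneg (β-3/4)),
    mul_nonneg (by linarith : (0:ℝ) ≤ β-3*a) ha,
    mul_nonneg (by linarith : (0:ℝ) ≤ β-3*a) (sq_nonneg a)]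

/-- Covering of one quadrant of the hexagon by three discs. -/
lemma hex_quad (a β : ℝ) (ha : 0 ≤ a) (hb : 0 ≤ β) (ha2 : a ≤ 1/2) (hab : a + β ≤ 1) :
    a^2 + β^2/3 ≤ 1/16 ∨ a^2 + β^2/3 + 1/8 ≤ β/2 ∨ a^2 + β^2/3 + 1/8 ≤ (3*a+β)/4 := by
  by_cases hP : a^2 + β^2/3 ≤ 1/16
  · exact Or.inl hP
  push_neg at hP
  rcases le_or_gt β (3*a) with hs | hs
  · right; right
    rcases le_or_gt β a with hba | hba
    · have key := hex_sector1 ((a-β)/2) ((3*a+β)/2) (by linarith) (by linarith) (by linarith)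
        (by nlinarith)
      nlinarith
    · have key := hex_sector1 ((β-a)/2) ((3*a+β)/2) (by linarith) (by linarith) (by linarith)
        (by nlinarith)
      nlinarith
  · exact Or.inr (Or.inl (hex_sector1 a β ha (by linarith) hab (by linarith)))

/-- A point of `EuclideanSpace ℝ (Fin 2)` from coordinates. -/
noncomputable def hexPt (u v : ℝ) : EuclideanSpace ℝ (Fin 2) :=
  (WithLp.equiv 2 (Fin 2 → ℝ)).symm ![u, v]

lemma hex_distle (x : EuclideanSpace ℝ (Fin 2)) (u v : ℝ)
    (h : (x 0 - u)^2 + (x 1 - v)^2 ≤ 1/16) :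
    x ∈ closedBall (hexPt u v) (1/4) := by
  rw [mem_closedBall, EuclideanSpace.dist_eq, Fin.sum_univ_two]
  have h4 : (1:ℝ)/4 = Real.sqrt (1/16) := by
    rw [show (1/16:ℝ) = (1/4)^2 by norm_num, Real.sqrt_sq (by norm_num)]
  rw [h4]
  apply Real.sqrt_le_sqrt
  simpa [hexPt, Real.dist_eq, sq_abs] using h

/-- The regular hexagon with opposite sides at distance 1 can be covered by 7 closed
discs of radius `1/4`. -/
theorem hexagon_covered_by_seven_discs :
    ∃ c : Fin 7 → EuclideanSpace ℝ (Fin 2),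
      regularHexagon ⊆ ⋃ i, closedBall (c i) (1 / 4) := by
  refine ⟨![hexPt 0 0, hexPt 0 (Real.sqrt 3/4), hexPt 0 (-(Real.sqrt 3/4)),
    hexPt (3/8) (Real.sqrt 3/8), hexPt (-(3/8)) (Real.sqrt 3/8),
    hexPt (3/8) (-(Real.sqrt 3/8)), hexPt (-(3/8)) (-(Real.sqrt 3/8))], ?_⟩
  intro x hx
  have h0 := hx 0
  have h1 := hx 1
  have h2 := hx 2
  simp only [PiLp.inner_apply, Fin.sum_univ_two, RCLike.inner_apply, conj_trivial,
    Matrix.cons_val_zero, Matrix.cons_val_one, Matrix.head_cons] at h0 h1 h2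
  norm_num [Real.cos_pi_div_three, Real.sin_pi_div_three] at h0 h1 h2
  rw [show (2:ℝ) * π / 3 = π - π/3 by ring, Real.cos_pi_sub, Real.sin_pi_sub] at h2
  rw [Real.cos_pi_div_three, Real.sin_pi_div_three] at h2
  have hs3 : Real.sqrt 3 ^ 2 = 3 := Real.sq_sqrt (by norm_num)
  have hs3' : (0:ℝ) ≤ Real.sqrt 3 := Real.sqrt_nonneg 3
  -- from the three strip conditions, get |x 0| ≤ 1/2 and |x 0| + √3 |x 1| ≤ 1
  rw [abs_le] at h1 h2
  have key : |x 0| + Real.sqrt 3 * |x 1| ≤ 1 := by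
    rcases abs_cases (x 0) with ⟨e0, _⟩ | ⟨e0, _⟩ <;>
      rcases abs_cases (x 1) with ⟨e1, _⟩ | ⟨e1, _⟩ <;>
      rw [e0, e1] <;> obtain ⟨h1a, h1b⟩ := h1 <;> obtain ⟨h2a, h2b⟩ := h2 <;> linarith
  have hβ : (Real.sqrt 3 * |x 1|)^2/3 = x 1 ^ 2 := by
    rw [mul_pow, hs3, sq_abs]; ring
  have hq := hex_quad |x 0| (Real.sqrt 3 * |x 1|) (abs_nonneg _)
    (mul_nonneg hs3' (abs_nonneg _)) h0 key
  rw [hβ, sq_abs] at hq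
  rcases hq with hq | hq | hq
  · exact Set.mem_iUnion.2 ⟨0, hex_distle x 0 0 (by nlinarith)⟩
  · rcases le_or_gt 0 (x 1) with hb | hb
    · rw [abs_of_nonneg hb] at hq
      exact Set.mem_iUnion.2 ⟨1, hex_distle x 0 (Real.sqrt 3/4) (by nlinarith)⟩
    · rw [abs_of_neg hb] at hq
      exact Set.mem_iUnion.2 ⟨2, hex_distle x 0 (-(Real.sqrt 3/4)) (by nlinarith)⟩
  · rcases le_or_gt 0 (x 0) with ha | ha <;> rcases le_or_gt 0 (x 1) with hb | hb
    · rw [abs_of_nonneg ha, abs_of_nonneg hb] at hq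
      exact Set.mem_iUnion.2 ⟨3, hex_distle x (3/8) (Real.sqrt 3/8) (by nlinarith)⟩
    · rw [abs_of_nonneg ha, abs_of_neg hb] at hq
      exact Set.mem_iUnion.2 ⟨5, hex_distle x (3/8) (-(Real.sqrt 3/8)) (by nlinarith)⟩
    · rw [abs_of_neg ha, abs_of_nonneg hb] at hq
      exact Set.mem_iUnion.2 ⟨4, hex_distle x (-(3/8)) (Real.sqrt 3/8) (by nlinarith)⟩
    · rw [abs_of_neg ha, abs_of_neg hb] at hq
      exact Set.mem_iUnion.2 ⟨6, hex_distle x (-(3/8)) (-(Real.sqrt 3/8)) (by nlinarith)⟩
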